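/- Let R and E be Banach spaces such that the dual R* is isomorphic to E (i.e., there is a bounded linear bijection from R* onto E with bounded inverse). Then the transfinite dual R^(ω²+1) is crudely finitely representable in E. -/

import Mathlib

universe u

/-- An ordinal is *even* if it is `0`, a limit ordinal, or of the form `β + 2n`
with `β` zero or a limit ordinal and `n ∈ ℕ`. -/
def IsEvenOrdinal (α : Ordinal.{0}) : Prop :=
  ∃ (β : Ordinal.{0}) (n : ℕ), (β = 0 ∨ Order.IsSuccLimit β) ∧ α = β + 2 * n

/-- An ordinal is *odd* if it is the successor of an even ordinal. -/
def IsOddOrdinal (γ : Ordinal.{0}) : Prop :=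
  ∃ α : Ordinal.{0}, IsEvenOrdinal α ∧ γ = α + 1

/-- The family `space : Ordinal → Type u` realizes the transfinite duals of `R`:
`space 0` is (isometric to) `R`, `space (α+1)` is (isometric to) the dual of `space α`,
and for an even `γ` the spaces `space β` for even `β < γ` sit inside `space γ` via a
compatible system of isometric embeddings `incl` which on the steps `β ↦ β + 2` is the
canonical embedding of a space into its bidual, and whose ranges have dense union in
`space α` when `α` is a limit ordinal (so `space α` is the completion of the union). -/
def IsTransfiniteDualSystem
    (R : Type u) [NormedAddCommGroup R] [NormedSpace ℝ R] [CompleteSpace R]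
    (space : Ordinal.{0} → Type u)
    [∀ α, NormedAddCommGroup (space α)] [∀ α, NormedSpace ℝ (space α)]
    [∀ α, CompleteSpace (space α)]
    (zeroEquiv : space 0 ≃ₗᵢ[ℝ] R)
    (succEquiv : ∀ α, space (α + 1) ≃ₗᵢ[ℝ] StrongDual ℝ (space α))
    (incl : ∀ β γ, β < γ → IsEvenOrdinal β → IsEvenOrdinal γ → (space β →ₗᵢ[ℝ] space γ)) :
    Prop :=
  (∀ β γ δ (h1 : β < γ) (h2 : γ < δ) (hβ : IsEvenOrdinal β) (hγ : IsEvenOrdinal γ)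
      (hδ : IsEvenOrdinal δ) (x : space β),
      incl γ δ h2 hγ hδ (incl β γ h1 hβ hγ x) = incl β δ (h1.trans h2) hβ hδ x) ∧
  (∀ β (hβ : IsEvenOrdinal β) (h2 : IsEvenOrdinal (β + 1 + 1)) (hlt : β < β + 1 + 1)
      (x : space β),
      incl β (β + 1 + 1) hlt hβ h2 x
        = (succEquiv (β + 1)).symm
            ((NormedSpace.inclusionInDoubleDual ℝ (space β) x).comp
              ((succEquiv β).toContinuousLinearEquiv :
                space (β + 1) →L[ℝ] StrongDual ℝ (space β)))) ∧
  (∀ α (hlim : Order.IsSuccLimit α) (hα : IsEvenOrdinal α),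
      Dense (⋃ (β : Ordinal.{0}) (h : β < α) (hβ : IsEvenOrdinal β),
        Set.range (incl β α h hβ hα)))

/-- `X` is crudely finitely representable in `Y`: there is `C ≥ 1` such that every
finite-dimensional subspace `F ⊆ X` admits a linear map `T : F → Y` with
`‖x‖ ≤ ‖T x‖ ≤ C‖x‖` for all `x ∈ F`. -/
def CrudelyFinitelyRepresentable (X Y : Type*) [NormedAddCommGroup X] [NormedSpace ℝ X]
    [NormedAddCommGroup Y] [NormedSpace ℝ Y] : Prop :=
  ∃ C : ℝ, 1 ≤ C ∧ ∀ F : Subspace ℝ X, FiniteDimensional ℝ F →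
    ∃ T : F →ₗ[ℝ] Y, ∀ x : F, ‖x‖ ≤ ‖T x‖ ∧ ‖T x‖ ≤ C * ‖x‖


/-!
Write `R^(α)` for `space α`. Since `R^(ω²+1)` is isometric to the dual of `R^(ω²)`, it suffices
to show, by induction over the even ordinals `β`, that `(R^(β))*` is finitely representable in
`R*` (with constants arbitrarily close to `1`); composing with the isomorphism `R* ≃ E` then
gives a crude representation in `E`.

* At `β = 0` there is an isometry `(R^(0))* ≃ R*`.
* At `β = γ + 2`, `(R^(γ+2))* = (R^(γ+1))**` is finitely representable in `R^(γ+1) = (R^(γ))*` by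
  the principle of local reflexivity, which we prove in its weak form through Helly's theorem:
  a finite-dimensional `F ⊆ Z**` is interpolated by an operator `T : F → Z` that agrees with `F`
  on a finite norming set of `Z*` and has norm at most `1 + δ` on a net of the unit sphere of `F`.
* At a limit `β`, the `R^(γ)`, `γ < β`, have dense union in `R^(β)`, so a finite norming set for a
  finite-dimensional `F ⊆ (R^(β))*` lies in a single `R^(Γ)`, and restriction to `R^(Γ)` is
  almost isometric on `F`; then apply the induction hypothesis at `Γ`.
-/

open Filter Topology Metric

def FinitelyRepresentableWith (C : ℝ) (X Y : Type*) [NormedAddCommGroup X] [NormedSpace ℝ X]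
    [NormedAddCommGroup Y] [NormedSpace ℝ Y] : Prop :=
  ∀ F : Subspace ℝ X, FiniteDimensional ℝ F →
    ∃ T : F →ₗ[ℝ] Y, ∀ x : F, ‖x‖ ≤ ‖T x‖ ∧ ‖T x‖ ≤ C * ‖x‖

def FinitelyRepresentable (X Y : Type*) [NormedAddCommGroup X] [NormedSpace ℝ X]
    [NormedAddCommGroup Y] [NormedSpace ℝ Y] : Prop :=
  ∀ C > 1, FinitelyRepresentableWith C X Y

section FinitelyRepresentable

variable {X Y W : Type*} [NormedAddCommGroup X] [NormedSpace ℝ X]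
  [NormedAddCommGroup Y] [NormedSpace ℝ Y] [NormedAddCommGroup W] [NormedSpace ℝ W]

lemma FinitelyRepresentableWith.mono {C D : ℝ} (h : FinitelyRepresentableWith C X Y)
    (hCD : C ≤ D) : FinitelyRepresentableWith D X Y := fun F hF ↦ by
  obtain ⟨T, hT⟩ := h F hF
  exact ⟨T, fun x ↦ ⟨(hT x).1, (hT x).2.trans (by gcongr)⟩⟩

lemma FinitelyRepresentableWith.exists_comp {V : Type*} [NormedAddCommGroup V]
    [NormedSpace ℝ V] [FiniteDimensional ℝ V] {C a b : ℝ} (h : FinitelyRepresentableWith C Y W)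
    (hC : 0 ≤ C) (T : V →ₗ[ℝ] Y) (hT : ∀ x, a * ‖x‖ ≤ ‖T x‖ ∧ ‖T x‖ ≤ b * ‖x‖) :
    ∃ S : V →ₗ[ℝ] W, ∀ x, a * ‖x‖ ≤ ‖S x‖ ∧ ‖S x‖ ≤ b * C * ‖x‖ := by
  obtain ⟨U, hU⟩ := h (LinearMap.range T) inferInstance
  refine ⟨U ∘ₗ T.rangeRestrict, fun x ↦ ?_⟩
  obtain ⟨hU₁, hU₂⟩ := hU (T.rangeRestrict x)
  refine ⟨(hT x).1.trans hU₁, hU₂.trans ?_⟩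
  rw [mul_comm b C, mul_assoc]
  exact mul_le_mul_of_nonneg_left (hT x).2 hC

lemma FinitelyRepresentableWith.trans {C D : ℝ} (h₁ : FinitelyRepresentableWith C X Y)
    (h₂ : FinitelyRepresentableWith D Y W) (hD : 0 ≤ D) :
    FinitelyRepresentableWith (C * D) X W := fun F hF ↦ by
  obtain ⟨T, hT⟩ := h₁ F hF
  obtain ⟨S, hS⟩ := h₂.exists_comp hD T (a := 1) (b := C) (by simpa using hT)
  exact ⟨S, by simpa using hS⟩

lemma FinitelyRepresentable.trans (h₁ : FinitelyRepresentable X Y)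
    (h₂ : FinitelyRepresentable Y W) : FinitelyRepresentable X W := fun C hC ↦ by
  have h : 1 < √C := by rwa [Real.lt_sqrt zero_le_one, one_pow]
  simpa [Real.mul_self_sqrt (by positivity : 0 ≤ C)] using
    (h₁ _ h).trans (h₂ _ h) (Real.sqrt_nonneg C)

lemma finitelyRepresentable_of_tendsto {ι : Type*} {l : Filter ι} [l.NeBot] {a b : ι → ℝ}
    (ha : Tendsto a l (𝓝 1)) (hb : Tendsto b l (𝓝 1))
    (h : ∀ᶠ i in l, ∀ F : Subspace ℝ X, FiniteDimensional ℝ F →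
      ∃ T : F →ₗ[ℝ] Y, ∀ x, a i * ‖x‖ ≤ ‖T x‖ ∧ ‖T x‖ ≤ b i * ‖x‖) :
    FinitelyRepresentable X Y := by
  intro C hC F hF
  have hba : Tendsto (fun i ↦ b i / a i) l (𝓝 (1 / 1)) := hb.div ha one_ne_zero
  rw [div_one] at hba
  obtain ⟨i, hi, hai, hbai⟩ := (h.and ((ha.eventually (lt_mem_nhds one_pos)).and
    (hba.eventually (gt_mem_nhds hC)))).exists
  obtain ⟨T, hT⟩ := hi F hF
  refine ⟨(a i)⁻¹ • T, fun x ↦ ?_⟩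
  rw [LinearMap.smul_apply, norm_smul, norm_inv, Real.norm_of_nonneg hai.le]
  constructor
  · rw [le_inv_mul_iff₀ hai]
    exact (hT x).1
  · calc (a i)⁻¹ * ‖T x‖ ≤ (a i)⁻¹ * (b i * ‖x‖) := by gcongr; exact (hT x).2
      _ = b i / a i * ‖x‖ := by ring
      _ ≤ C * ‖x‖ := by gcongr

lemma LinearIsometry.finitelyRepresentable (e : X →ₗᵢ[ℝ] Y) : FinitelyRepresentable X Y :=
  fun _ hC F _ ↦ ⟨e.toLinearMap ∘ₗ F.subtype, fun x ↦ by
    simpa using (le_mul_of_one_le_left (norm_nonneg x) hC.le)⟩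

lemma ContinuousLinearEquiv.finitelyRepresentableWith (e : Y ≃L[ℝ] W) :
    FinitelyRepresentableWith (‖(e.symm : W →L[ℝ] Y)‖ * ‖(e : Y →L[ℝ] W)‖) Y W :=
  fun F _ ↦ by
  refine ⟨‖(e.symm : W →L[ℝ] Y)‖ • (e : Y →L[ℝ] W).toLinearMap ∘ₗ F.subtype, fun x ↦ ?_⟩
  have hx : ‖(x : Y)‖ ≤ ‖(e.symm : W →L[ℝ] Y)‖ * ‖e x‖ := by
    simpa using (e.symm : W →L[ℝ] Y).le_opNorm (e x)
  have hex : ‖e x‖ ≤ ‖(e : Y →L[ℝ] W)‖ * ‖(x : Y)‖ := (e : Y →L[ℝ] W).le_opNorm x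
  simp only [LinearMap.smul_apply, LinearMap.comp_apply, Submodule.subtype_apply, norm_smul,
    norm_norm, Submodule.coe_norm, ContinuousLinearMap.coe_coe]
  exact ⟨hx, by rw [mul_assoc]; gcongr; exact hex⟩

lemma FinitelyRepresentable.crudelyFinitelyRepresentable (h : FinitelyRepresentable X Y)
    (e : Y ≃L[ℝ] W) : CrudelyFinitelyRepresentable X W := by
  set K := ‖(e.symm : W →L[ℝ] Y)‖ * ‖(e : Y →L[ℝ] W)‖
  refine ⟨2 * max K 1, by linarith [le_max_right K 1], ?_⟩
  exact ((h 2 one_lt_two).trans e.finitelyRepresentableWith (by positivity)).mono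
    (by gcongr; exact le_max_left _ _)

end FinitelyRepresentable

section NormedSpace

variable {X Y : Type*} [NormedAddCommGroup X] [NormedSpace ℝ X]
  [NormedAddCommGroup Y] [NormedSpace ℝ Y]

lemma Dense.exists_norm_lt_one_lt_apply {D : Set X} (hD : Dense D) (f : StrongDual ℝ X) {r : ℝ}
    (hr : r < ‖f‖) : ∃ y ∈ D, ‖y‖ < 1 ∧ r < f y := by
  obtain ⟨z, hz⟩ : ∃ z, ‖z‖ < 1 ∧ r < f z := by
    rcases lt_or_ge r 0 with hr₀ | hr₀
    · exact ⟨0, by simpa using hr₀⟩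
    obtain ⟨z, hz₁, hz⟩ := f.exists_lt_apply_of_lt_opNorm hr
    rcases le_or_gt 0 (f z) with h | h
    · exact ⟨z, hz₁, by rwa [Real.norm_of_nonneg h] at hz⟩
    · rw [Real.norm_of_nonpos h.le] at hz
      exact ⟨-z, by rwa [norm_neg], by rwa [map_neg]⟩
  exact hD.exists_mem_open
    ((isOpen_lt continuous_norm continuous_const).inter (isOpen_lt continuous_const f.continuous))
    ⟨z, hz⟩

lemma exists_finset_sphere_net (F : Type*) [NormedAddCommGroup F] [NormedSpace ℝ F]
    [FiniteDimensional ℝ F] {δ : ℝ} (hδ : 0 < δ) :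
    ∃ t : Finset F, (∀ w ∈ t, ‖w‖ = 1) ∧ ∀ x, ‖x‖ = 1 → ∃ w ∈ t, ‖x - w‖ < δ := by
  obtain ⟨t, hts, htf, hcov⟩ := (isCompact_sphere (0 : F) 1).finite_cover_balls hδ
  refine ⟨htf.toFinset, fun w hw ↦ by simpa using hts (htf.mem_toFinset.1 hw), fun x hx ↦ ?_⟩
  obtain ⟨w, hw, hxw⟩ := Set.mem_iUnion₂.1 (hcov (by simpa using hx))
  exact ⟨w, htf.mem_toFinset.2 hw, by rwa [mem_ball, dist_eq_norm] at hxw⟩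

lemma exists_finset_norming (F : Subspace ℝ (StrongDual ℝ X)) [FiniteDimensional ℝ F]
    {D : Set X} (hD : Dense D) {ε : ℝ} (hε : 0 < ε) :
    ∃ s : Finset X, ↑s ⊆ D ∧ (∀ y ∈ s, ‖y‖ ≤ 1) ∧
      ∀ f : F, ∃ y ∈ s, (1 - ε) * ‖f‖ ≤ (f : StrongDual ℝ X) y := by
  classical
  choose y hyD hy₁ hy using fun f : F ↦
    hD.exists_norm_lt_one_lt_apply (f : StrongDual ℝ X) (sub_lt_self _ (half_pos hε))
  obtain ⟨t, ht₁, ht⟩ := exists_finset_sphere_net F (half_pos hε)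
  -- `y 0` is only there to make the set nonempty, for the case `f = 0`.
  refine ⟨insert (y 0) (t.image y), ?_, ?_, fun f ↦ ?_⟩
  · simp only [Finset.coe_insert, Finset.coe_image, Set.insert_subset_iff, Set.image_subset_iff]
    exact ⟨hyD 0, fun f _ ↦ hyD f⟩
  · simp only [Finset.mem_insert, Finset.mem_image]
    rintro _ (rfl | ⟨f, _, rfl⟩) <;> exact (hy₁ _).le
  rcases eq_or_ne f 0 with rfl | hf
  · exact ⟨y 0, Finset.mem_insert_self _ _, by simp⟩
  have hf₀ : ‖f‖ ≠ 0 := (norm_ne_zero_iff (E := F)).2 hf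
  set u : F := ‖f‖⁻¹ • f
  have hu : (u : StrongDual ℝ X) = ‖f‖⁻¹ • (f : StrongDual ℝ X) := rfl
  obtain ⟨w, hwt, huw⟩ := ht u (by
    change ‖(u : StrongDual ℝ X)‖ = 1
    rw [hu, norm_smul, norm_inv, norm_norm]
    exact inv_mul_cancel₀ hf₀)
  refine ⟨y w, Finset.mem_insert_of_mem (Finset.mem_image_of_mem y hwt), ?_⟩
  have hw : 1 - ε / 2 < (w : StrongDual ℝ X) (y w) := by
    simpa [← Submodule.coe_norm, ht₁ w hwt] using hy w
  have hwu : ((w : StrongDual ℝ X) - u) (y w) ≤ ε / 2 :=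
    calc _ ≤ ‖(w : StrongDual ℝ X) - u‖ * ‖y w‖ :=
          (le_abs_self _).trans (((w : StrongDual ℝ X) - u).le_opNorm _)
      _ ≤ ε / 2 * 1 := by
        have : ‖(w : StrongDual ℝ X) - u‖ = ‖u - w‖ := norm_sub_rev _ _
        rw [this]
        exact mul_le_mul huw.le (hy₁ w).le (norm_nonneg _) (by positivity)
      _ = ε / 2 := mul_one _
  have hfu : (f : StrongDual ℝ X) (y w) = ‖f‖ * (u : StrongDual ℝ X) (y w) := by
    rw [hu, smul_apply, smul_eq_mul, ← mul_assoc, mul_inv_cancel₀ hf₀, one_mul]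
  rw [hfu, mul_comm]
  refine mul_le_mul_of_nonneg_left ?_ (norm_nonneg f)
  rw [sub_apply] at hwu
  linarith

lemma LinearMap.norm_apply_le_of_sphere_net {F : Type*} [NormedAddCommGroup F] [NormedSpace ℝ F]
    [FiniteDimensional ℝ F] (T : F →ₗ[ℝ] Y) {t : Set F} {a δ : ℝ} (ha : 0 ≤ a) (hδ₀ : 0 < δ)
    (hδ₁ : δ < 1) (ht : ∀ x, ‖x‖ = 1 → ∃ w ∈ t, ‖x - w‖ < δ) (hT : ∀ w ∈ t, ‖T w‖ ≤ a)
    (x : F) : ‖T x‖ ≤ a / (1 - δ) * ‖x‖ := by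
  set T' := LinearMap.toContinuousLinearMap T
  have hT' : ‖T'‖ ≤ a + ‖T'‖ * δ := by
    refine T'.opNorm_le_of_unit_norm (by positivity) fun x hx ↦ ?_
    obtain ⟨w, hw, hxw⟩ := ht x hx
    have hsplit : T' x = T w + T' (x - w) := by simp [T']
    rw [hsplit]
    exact norm_add_le_of_le (hT w hw) ((T'.le_opNorm _).trans (by gcongr))
  have hK : ‖T'‖ ≤ a / (1 - δ) := by
    rw [le_div_iff₀ (by linarith)]
    linarith
  exact (T'.le_opNorm x).trans (by gcongr)

lemma ContinuousLinearMap.sum_norm_comp_single_le {ι : Type*} [Fintype ι] [DecidableEq ι]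
    (ψ : StrongDual ℝ (ι → X)) :
    ∑ i, ‖ψ.comp (ContinuousLinearMap.single ℝ (fun _ ↦ X) i)‖ ≤ ‖ψ‖ := by
  set χ := fun i ↦ ψ.comp (ContinuousLinearMap.single ℝ (fun _ ↦ X) i)
  set n : ℝ := (Fintype.card ι : ℝ)
  have key : ∀ η > 0, ∑ i, ‖χ i‖ ≤ ‖ψ‖ + n * η := by
    intro η hη
    choose z _ hz₁ hz using fun i ↦
      dense_univ.exists_norm_lt_one_lt_apply (χ i) (sub_lt_self _ hη)
    have hψz : ψ z = ∑ i, χ i (z i) :=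
      (ContinuousLinearMap.sum_comp_single (L := ψ) (v := z)).symm
    have hz₁ : ‖z‖ ≤ 1 := (pi_norm_le_iff_of_nonneg zero_le_one).2 fun i ↦ (hz₁ i).le
    calc ∑ i, ‖χ i‖ = ∑ i, (‖χ i‖ - η) + n * η := by
          simp [Finset.sum_sub_distrib, n]
      _ ≤ ψ z + n * η := by
          rw [hψz]
          gcongr with i
          exact (hz i).le
      _ ≤ ‖ψ‖ + n * η := by
          gcongr
          exact (le_abs_self _).trans
            ((ψ.le_opNorm z).trans (mul_le_of_le_one_right (norm_nonneg _) hz₁))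
  refine le_of_forall_pos_le_add fun ε hε ↦ (key _ (by positivity : 0 < ε / (n + 1))).trans ?_
  gcongr
  rw [mul_div_assoc', div_le_iff₀ (by positivity)]
  nlinarith

lemma exists_strongDual_comp_eq_of_le (L : X →L[ℝ] Y) (φ : X →ₗ[ℝ] ℝ) {M : ℝ}
    (hM : 0 ≤ M) (hφ : ∀ x, φ x ≤ M * ‖L x‖) :
    ∃ ψ : StrongDual ℝ Y, ‖ψ‖ ≤ M ∧ ∀ x, ψ (L x) = φ x := by
  have habs : ∀ x, |φ x| ≤ M * ‖L x‖ := fun x ↦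
    abs_le.2 ⟨by linarith [show -φ x ≤ M * ‖L x‖ by simpa using hφ (-x)], hφ x⟩
  obtain ⟨S, hS⟩ := (L : X →ₗ[ℝ] Y).rangeRestrict.exists_rightInverse_of_surjective
    (LinearMap.range_rangeRestrict _)
  have hLS : ∀ y, L (S y) = y := fun y ↦ congrArg Subtype.val (LinearMap.congr_fun hS y)
  have hφS : ∀ x, φ (S ((L : X →ₗ[ℝ] Y).rangeRestrict x)) = φ x := by
    intro x
    have h₀ : L (S ((L : X →ₗ[ℝ] Y).rangeRestrict x) - x) = 0 := by
      rw [map_sub, hLS]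
      simp
    have h := habs (S ((L : X →ₗ[ℝ] Y).rangeRestrict x) - x)
    rw [h₀, norm_zero, mul_zero, map_sub] at h
    exact sub_eq_zero.1 (abs_nonpos_iff.1 h)
  let ψ₀ : StrongDual ℝ (LinearMap.range (L : X →ₗ[ℝ] Y)) :=
    (φ ∘ₗ S).mkContinuous M fun y ↦ by simpa [hLS] using habs (S y)
  obtain ⟨ψ, hψ, hψn⟩ := exists_extension_norm_eq _ ψ₀
  refine ⟨ψ, hψn ▸ LinearMap.mkContinuous_norm_le _ hM _, fun x ↦ ?_⟩
  simpa [ψ₀, hφS] using hψ ((L : X →ₗ[ℝ] Y).rangeRestrict x)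

lemma LinearMap.apply_le_of_norm_le_imp_lt (f : X →ₗ[ℝ] ℝ) (L : X →L[ℝ] Y) {r u : ℝ}
    (hr : 0 < r) (hf : ∀ x, ‖L x‖ ≤ r → f x < u) (x : X) : f x ≤ u / r * ‖L x‖ := by
  have hu : 0 < u := by simpa using hf 0 (by simpa using hr.le)
  by_contra! h
  have hs : ‖L x‖ < f x * r / u := by
    rw [lt_div_iff₀ hu]
    rw [div_mul_eq_mul_div, div_lt_iff₀ hr] at h
    linarith
  have hs₀ : 0 < f x * r / u := (norm_nonneg _).trans_lt hs
  have hlt := hf ((r / (f x * r / u)) • x) (by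
    rw [map_smul, norm_smul, Real.norm_of_nonneg (by positivity), div_mul_eq_mul_div,
      div_le_iff₀ hs₀]
    gcongr)
  rw [map_smul, smul_eq_mul] at hlt
  have hfx : 0 < f x := by
    by_contra! h'
    linarith [mul_nonneg (div_pos hu hr).le (norm_nonneg (L x))]
  field_simp at hlt
  linarith

lemma exists_eq_of_mem_closure_image {U : Type*} [NormedAddCommGroup U] [NormedSpace ℝ U]
    [FiniteDimensional ℝ U] (Φ : X →ₗ[ℝ] U) (L : X →L[ℝ] Y) {r r' : ℝ} (hr : r < r') {c : U}
    (hc : c ∈ closure (Φ '' {x | ‖L x‖ ≤ r})) : ∃ x, Φ x = c ∧ ‖L x‖ ≤ r' := by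
  have hcΦ : c ∈ LinearMap.range Φ :=
    (Submodule.closed_of_finiteDimensional _).closure_subset_iff.2
      (by rintro _ ⟨x, -, rfl⟩; exact ⟨x, rfl⟩) hc
  obtain ⟨S, hS⟩ := Φ.rangeRestrict.exists_rightInverse_of_surjective
    (LinearMap.range_rangeRestrict _)
  have hΦS : ∀ y, Φ (S y) = y := fun y ↦ congrArg Subtype.val (LinearMap.congr_fun hS y)
  -- `L ∘ S` is bounded because `range Φ` is finite-dimensional: correct `x₀` by `S (c - Φ x₀)`.
  set P : LinearMap.range Φ →L[ℝ] Y := LinearMap.toContinuousLinearMap ((L : X →ₗ[ℝ] Y) ∘ₗ S)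
  have hθ : 0 < (r' - r) / (‖P‖ + 1) := div_pos (sub_pos.2 hr) (by positivity)
  obtain ⟨_, ⟨x₀, hx₀, rfl⟩, hdist⟩ := Metric.mem_closure_iff.1 hc _ hθ
  set e : LinearMap.range Φ := ⟨c - Φ x₀, sub_mem hcΦ ⟨x₀, rfl⟩⟩
  refine ⟨x₀ + S e, by simp [hΦS, e], ?_⟩
  have he : ‖e‖ ≤ (r' - r) / (‖P‖ + 1) := by
    change ‖c - Φ x₀‖ ≤ _
    rw [← dist_eq_norm]
    exact hdist.le
  have hPe : ‖P‖ * ((r' - r) / (‖P‖ + 1)) ≤ r' - r := by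
    rw [mul_div_assoc', div_le_iff₀ (by positivity)]
    nlinarith [norm_nonneg P]
  calc ‖L (x₀ + S e)‖ ≤ ‖L x₀‖ + ‖P e‖ := by simpa [P] using norm_add_le (L x₀) (L (S e))
    _ ≤ r + ‖P‖ * ((r' - r) / (‖P‖ + 1)) :=
        add_le_add hx₀ ((P.le_opNorm e).trans (by gcongr))
    _ ≤ r' := by linarith

end NormedSpace

section LocalReflexivity

variable {Z : Type*} [NormedAddCommGroup Z] [NormedSpace ℝ Z]
  {ι κ J : Type*} [Fintype κ]

noncomputable def rowCombination {E : Type*} [NormedAddCommGroup E] [NormedSpace ℝ E]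
    (A : ι → κ → ℝ) : (κ → E) →L[ℝ] (ι → E) :=
  ContinuousLinearMap.pi fun i ↦ ∑ k, A i k • ContinuousLinearMap.proj k

@[simp]
lemma rowCombination_apply {E : Type*} [NormedAddCommGroup E] [NormedSpace ℝ E]
    (A : ι → κ → ℝ) (x : κ → E) (i : ι) : rowCombination A x i = ∑ k, A i k • x k := by
  simp [rowCombination]

lemma sum_bidual_apply_le_of_forall_le [Fintype ι] (v : κ → StrongDual ℝ (StrongDual ℝ Z))
    (A : ι → κ → ℝ) (hA : ‖rowCombination A v‖ ≤ 1) (h : κ → StrongDual ℝ Z) {M : ℝ}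
    (hM : 0 ≤ M) (hh : ∀ x : κ → Z, ∑ k, h k (x k) ≤ M * ‖rowCombination A x‖) :
    ∑ k, v k (h k) ≤ M := by
  classical
  -- Hahn–Banach factors `x ↦ ∑ k, h k (x k)` through `rowCombination A` as `∑ i, χ i (· i)`
  -- with `∑ i, ‖χ i‖ ≤ M`, so that `h k = ∑ i, A i k • χ i` and `v` can be paired with `χ`.
  set φ : StrongDual ℝ (κ → Z) := ∑ k, (h k).comp (ContinuousLinearMap.proj k)
  obtain ⟨ψ, hψ, hψL⟩ := exists_strongDual_comp_eq_of_le (rowCombination A) φ.toLinearMap hM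
    (by simpa [φ] using hh)
  set χ := fun i ↦ ψ.comp (ContinuousLinearMap.single ℝ (fun _ ↦ Z) i)
  have hh_eq : ∀ k, h k = ∑ i, A i k • χ i := by
    intro k
    ext z
    have := hψL (Pi.single k z)
    rw [← ContinuousLinearMap.sum_comp_single (L := ψ)] at this
    simpa [φ, χ, Pi.single_apply, apply_ite (h _)] using this.symm
  calc ∑ k, v k (h k) = ∑ i, (rowCombination A v i) (χ i) := by
        simpa [hh_eq] using Finset.sum_comm
    _ ≤ ∑ i, ‖χ i‖ := Finset.sum_le_sum fun i _ ↦ (le_abs_self _).trans <|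
        ((rowCombination A v i).le_opNorm (χ i)).trans <|
          mul_le_of_le_one_left (norm_nonneg _) ((norm_le_pi_norm _ i).trans hA)
    _ ≤ ‖ψ‖ := ψ.sum_norm_comp_single_le
    _ ≤ M := hψ

lemma bidual_apply_comp_pi [Fintype J] (v : StrongDual ℝ (StrongDual ℝ Z))
    (g : J → StrongDual ℝ Z) (ℓ : StrongDual ℝ (J → ℝ)) :
    v (ℓ.comp (ContinuousLinearMap.pi g)) = ℓ (fun j ↦ v (g j)) := by
  classical
  set e : J → J → ℝ := fun j i ↦ if j = i then 1 else 0
  have hℓ : ∀ y, ℓ y = ∑ j, y j * ℓ (e j) := fun y ↦ by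
    simpa using LinearMap.pi_apply_eq_sum_univ (ℓ : (J → ℝ) →ₗ[ℝ] ℝ) y
  have hcomp : ℓ.comp (ContinuousLinearMap.pi g) = ∑ j, ℓ (e j) • g j := by
    ext z
    simp [hℓ (fun j ↦ g j z), mul_comm]
  simp [hcomp, hℓ (fun j ↦ v (g j)), mul_comm]

lemma mem_closure_image_rowCombination_le [Fintype ι] [Fintype J] (g : J → StrongDual ℝ Z)
    (v : κ → StrongDual ℝ (StrongDual ℝ Z)) (A : ι → κ → ℝ) (hA : ‖rowCombination A v‖ ≤ 1)
    {r : ℝ} (hr : 1 < r) :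
    (fun k j ↦ v k (g j)) ∈
      closure (ContinuousLinearMap.piMap (fun _ : κ ↦ ContinuousLinearMap.pi g) ''
        {x | ‖rowCombination A x‖ ≤ r}) := by
  classical
  set Φ := ContinuousLinearMap.piMap (fun _ : κ ↦ ContinuousLinearMap.pi g)
  have hconv : Convex ℝ (closure (Φ '' {x | ‖rowCombination A x‖ ≤ r})) := by
    have hC : {x | ‖rowCombination A x‖ ≤ r} = rowCombination A ⁻¹' closedBall (0 : ι → Z) r :=
      by ext; simp
    rw [hC]
    have h₁ := (convex_closedBall (0 : ι → Z) r).linear_preimage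
      (rowCombination (E := Z) A : (κ → Z) →ₗ[ℝ] (ι → Z))
    exact (h₁.linear_image (Φ : (κ → Z) →ₗ[ℝ] (κ → J → ℝ))).closure
  by_contra hc
  obtain ⟨φ, u, hφu, hφc⟩ := geometric_hahn_banach_closed_point hconv isClosed_closure hc
  set h : κ → StrongDual ℝ Z := fun k ↦
    (φ.comp (ContinuousLinearMap.single ℝ (fun _ ↦ J → ℝ) k)).comp (ContinuousLinearMap.pi g)
  have hφΦ : ∀ x, φ (Φ x) = ∑ k, h k (x k) := fun x ↦
    (ContinuousLinearMap.sum_comp_single (L := φ) (v := Φ x)).symm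
  have hu : 0 < u := by
    simpa using hφu 0 (subset_closure ⟨0, by simpa using (zero_lt_one.trans hr).le, map_zero Φ⟩)
  have hle : ∑ k, v k (h k) ≤ u / r :=
    sum_bidual_apply_le_of_forall_le v A hA h (by positivity) fun x ↦ hφΦ x ▸
      (φ.comp Φ).toLinearMap.apply_le_of_norm_le_imp_lt (rowCombination A) (by linarith)
        (fun x hx ↦ hφu _ (subset_closure ⟨x, hx, rfl⟩)) x
  have hφv : φ (fun k j ↦ v k (g j)) = ∑ k, v k (h k) := by
    rw [← ContinuousLinearMap.sum_comp_single (L := φ)]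
    exact Finset.sum_congr rfl fun k _ ↦ (bidual_apply_comp_pi _ _ _).symm
  linarith [div_lt_self hu hr]

lemma exists_interpolation_rowCombination_le [Fintype ι] [Fintype J] (g : J → StrongDual ℝ Z)
    (v : κ → StrongDual ℝ (StrongDual ℝ Z)) (A : ι → κ → ℝ) (hA : ‖rowCombination A v‖ ≤ 1)
    {r : ℝ} (hr : 1 < r) :
    ∃ x : κ → Z, (∀ k j, g j (x k) = v k (g j)) ∧ ‖rowCombination A x‖ ≤ r := by
  obtain ⟨x, hx, hxr⟩ := exists_eq_of_mem_closure_image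
    (ContinuousLinearMap.piMap (fun _ : κ ↦ ContinuousLinearMap.pi g)).toLinearMap
    (rowCombination A) (show (1 + r) / 2 < r by linarith)
    (mem_closure_image_rowCombination_le g v A hA (show 1 < (1 + r) / 2 by linarith))
  exact ⟨x, fun k j ↦ congrFun (congrFun hx k) j, hxr⟩

lemma exists_linearMap_interpolation_bidual [Fintype ι] [Fintype J] {V : Type*}
    [AddCommGroup V] [Module ℝ V] [FiniteDimensional ℝ V]
    (e : V →ₗ[ℝ] StrongDual ℝ (StrongDual ℝ Z)) (g : J → StrongDual ℝ Z) (t : ι → V)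
    (ht : ∀ i, ‖e (t i)‖ ≤ 1) {r : ℝ} (hr : 1 < r) :
    ∃ T : V →ₗ[ℝ] Z, (∀ f j, g j (T f) = e f (g j)) ∧ ∀ i, ‖T (t i)‖ ≤ r := by
  set b := Module.finBasis ℝ V
  set A : ι → Fin _ → ℝ := fun i ↦ b.equivFun (t i)
  have hcomb : ∀ f : V, ∑ k, b.equivFun f k • e (b k) = e f := fun f ↦ by
    simp_rw [← map_smul, ← map_sum, b.sum_equivFun]
  have hA : ‖rowCombination A (fun k ↦ e (b k))‖ ≤ 1 :=
    (pi_norm_le_iff_of_nonneg zero_le_one).2 fun i ↦ by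
      rw [rowCombination_apply]
      exact hcomb (t i) ▸ ht i
  obtain ⟨x, hxg, hxA⟩ := exists_interpolation_rowCombination_le g _ A hA hr
  have hT : ∀ f, b.constr ℝ x f = ∑ k, b.equivFun f k • x k := fun f ↦
    b.constr_apply_fintype ℝ x f
  refine ⟨b.constr ℝ x, fun f j ↦ ?_, fun i ↦ ?_⟩
  · rw [hT, map_sum, ← hcomb f]
    simp [hxg]
  · rw [hT]
    simpa [A] using (norm_le_pi_norm (rowCombination A x) i).trans hxA

end LocalReflexivity

theorem finitelyRepresentable_bidual (Z : Type*) [NormedAddCommGroup Z] [NormedSpace ℝ Z] :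
    FinitelyRepresentable (StrongDual ℝ (StrongDual ℝ Z)) Z := by
  have ha : Tendsto (fun δ : ℝ ↦ 1 - δ) (𝓝[>] 0) (𝓝 1) :=
    ((continuous_const.sub continuous_id).tendsto' 0 1 (sub_zero 1)).mono_left nhdsWithin_le_nhds
  have hb : Tendsto (fun δ : ℝ ↦ (1 + δ) / (1 - δ)) (𝓝[>] 0) (𝓝 1) := by
    have hc : ContinuousAt (fun δ : ℝ ↦ (1 + δ) / (1 - δ)) 0 := by fun_prop (disch := norm_num)
    simpa using hc.tendsto.mono_left nhdsWithin_le_nhds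
  refine finitelyRepresentable_of_tendsto ha hb ?_
  filter_upwards [Ioo_mem_nhdsGT (zero_lt_one' ℝ)] with δ ⟨hδ₀, hδ₁⟩ F hF
  obtain ⟨t, ht₁, ht⟩ := exists_finset_sphere_net F hδ₀
  obtain ⟨s, -, hs₁, hs⟩ := exists_finset_norming F dense_univ hδ₀
  obtain ⟨T, hTg, hTt⟩ := exists_linearMap_interpolation_bidual F.subtype
    (fun g : s ↦ (g : StrongDual ℝ Z)) (fun w : t ↦ (w : F)) (fun w ↦ (ht₁ w w.2).le)
    (lt_add_of_pos_right 1 hδ₀)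
  refine ⟨T, fun f ↦ ⟨?_, T.norm_apply_le_of_sphere_net (t := t) (by positivity) hδ₀ hδ₁ ht
    (fun w hw ↦ hTt ⟨w, hw⟩) f⟩⟩
  obtain ⟨g, hg, hfg⟩ := hs f
  calc (1 - δ) * ‖f‖ ≤ (f : StrongDual ℝ (StrongDual ℝ Z)) g := hfg
    _ = g (T f) := (hTg f ⟨g, hg⟩).symm
    _ ≤ ‖T f‖ := (le_abs_self _).trans ((g.le_opNorm _).trans
        (mul_le_of_le_one_left (norm_nonneg _) (hs₁ g hg)))

noncomputable def LinearIsometryEquiv.strongDualMap {A B : Type*} [NormedAddCommGroup A]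
    [NormedSpace ℝ A] [NormedAddCommGroup B] [NormedSpace ℝ B] (e : A ≃ₗᵢ[ℝ] B) :
    StrongDual ℝ B →ₗᵢ[ℝ] StrongDual ℝ A where
  toFun f := f.comp (e : A →L[ℝ] B)
  map_add' _ _ := rfl
  map_smul' _ _ := rfl
  norm_map' f := f.opNorm_comp_linearIsometryEquiv e

section Ordinal

lemma IsEvenOrdinal.zero : IsEvenOrdinal 0 := ⟨0, 0, Or.inl rfl, by simp⟩

lemma Order.IsSuccLimit.isEvenOrdinal {β : Ordinal.{0}} (h : Order.IsSuccLimit β) :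
    IsEvenOrdinal β :=
  ⟨β, 0, Or.inr h, by simp⟩

lemma IsEvenOrdinal.add_one_add_one {γ : Ordinal.{0}} (h : IsEvenOrdinal γ) :
    IsEvenOrdinal (γ + 1 + 1) := by
  obtain ⟨l, n, hl, rfl⟩ := h
  refine ⟨l, n + 1, hl, ?_⟩
  push_cast
  rw [mul_add, mul_one, ← add_assoc, ← one_add_one_eq_two, ← add_assoc]

lemma IsEvenOrdinal.eq_zero_or_isSuccLimit_or_eq_add_one_add_one {β : Ordinal.{0}}
    (h : IsEvenOrdinal β) :
    β = 0 ∨ Order.IsSuccLimit β ∨ ∃ γ, IsEvenOrdinal γ ∧ β = γ + 1 + 1 := by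
  obtain ⟨l, n, hl, rfl⟩ := h
  cases n with
  | zero =>
    simp only [Nat.cast_zero, mul_zero, add_zero]
    exact hl.imp id Or.inl
  | succ m =>
    refine Or.inr (Or.inr ⟨l + 2 * m, ⟨l, m, hl, rfl⟩, ?_⟩)
    push_cast
    rw [mul_add, mul_one, ← add_assoc, ← one_add_one_eq_two, ← add_assoc]

lemma Order.IsSuccLimit.exists_isEvenOrdinal_gt {β : Ordinal.{0}} (hβ : Order.IsSuccLimit β)
    (s : Finset Ordinal.{0}) (hs : ∀ o ∈ s, IsEvenOrdinal o ∧ o < β) :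
    ∃ Γ, IsEvenOrdinal Γ ∧ Γ < β ∧ ∀ o ∈ s, o < Γ := by
  obtain ⟨m, hmem, hmax⟩ : ∃ m ∈ insert 0 s, ∀ o ∈ s, o ≤ m :=
    ⟨_, Finset.max'_mem _ (Finset.insert_nonempty 0 s),
      fun o ho ↦ Finset.le_max' _ o (Finset.mem_insert_of_mem ho)⟩
  have hm : IsEvenOrdinal m ∧ m < β := by
    rcases Finset.mem_insert.1 hmem with rfl | h
    · exact ⟨IsEvenOrdinal.zero, hβ.bot_lt⟩
    · exact hs m h
  refine ⟨m + 1 + 1, hm.1.add_one_add_one, hβ.succ_lt (hβ.succ_lt hm.2), fun o ho ↦ ?_⟩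
  calc o ≤ m := hmax o ho
    _ < m + 1 + 1 := by
        rw [add_assoc]
        exact lt_add_of_pos_right m (by norm_num)

end Ordinal

namespace IsTransfiniteDualSystem

variable {R : Type u} [NormedAddCommGroup R] [NormedSpace ℝ R] [CompleteSpace R]
  {space : Ordinal.{0} → Type u} [∀ α, NormedAddCommGroup (space α)]
  [∀ α, NormedSpace ℝ (space α)] [∀ α, CompleteSpace (space α)]
  {zeroEquiv : space 0 ≃ₗᵢ[ℝ] R} {succEquiv : ∀ α, space (α + 1) ≃ₗᵢ[ℝ] StrongDual ℝ (space α)}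
  {incl : ∀ β γ, β < γ → IsEvenOrdinal β → IsEvenOrdinal γ → (space β →ₗᵢ[ℝ] space γ)}

lemma exists_norm_comp_incl_ge (hsys : IsTransfiniteDualSystem R space zeroEquiv succEquiv incl)
    {β : Ordinal.{0}} (hlim : Order.IsSuccLimit β) (hβ : IsEvenOrdinal β)
    (F : Subspace ℝ (StrongDual ℝ (space β))) [FiniteDimensional ℝ F] {ε : ℝ} (hε : 0 < ε) :
    ∃ Γ, ∃ (hΓβ : Γ < β) (hΓ : IsEvenOrdinal Γ), ∀ f : F, (1 - ε) * ‖f‖ ≤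
      ‖(f : StrongDual ℝ (space β)).comp (incl Γ β hΓβ hΓ hβ).toContinuousLinearMap‖ := by
  obtain ⟨s, hsD, hs₁, hs⟩ := exists_finset_norming F (hsys.2.2 β hlim hβ) hε
  have hmem : ∀ y ∈ s, ∃ o, ∃ (ho : o < β) (hoe : IsEvenOrdinal o),
      y ∈ Set.range (incl o β ho hoe hβ) := fun y hy ↦ by
    simpa only [Set.mem_iUnion] using hsD hy
  choose! o ho using hmem
  obtain ⟨Γ, hΓ, hΓβ, hoΓ⟩ := hlim.exists_isEvenOrdinal_gt (s.image o) (by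
    simp only [Finset.mem_image]
    rintro _ ⟨y, hy, rfl⟩
    obtain ⟨hyβ, hye, -⟩ := ho y hy
    exact ⟨hye, hyβ⟩)
  refine ⟨Γ, hΓβ, hΓ, fun f ↦ ?_⟩
  obtain ⟨y, hy, hfy⟩ := hs f
  obtain ⟨hyβ, hye, z, hz⟩ := ho y hy
  set ι := incl Γ β hΓβ hΓ hβ
  set w := incl (o y) Γ (hoΓ _ (Finset.mem_image_of_mem o hy)) hye hΓ z
  have hw : ι w = y := (hsys.1 _ _ _ _ _ _ _ _ z).trans hz
  have hw₁ : ‖w‖ ≤ 1 := by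
    rw [← ι.norm_map, hw]
    exact hs₁ y hy
  calc (1 - ε) * ‖f‖ ≤ (f : StrongDual ℝ (space β)) (ι w) := hw ▸ hfy
    _ ≤ ‖(f : StrongDual ℝ (space β)).comp ι.toContinuousLinearMap‖ * ‖w‖ :=
        (le_abs_self _).trans
          (((f : StrongDual ℝ (space β)).comp ι.toContinuousLinearMap).le_opNorm w)
    _ ≤ ‖(f : StrongDual ℝ (space β)).comp ι.toContinuousLinearMap‖ :=
        mul_le_of_le_one_right (norm_nonneg _) hw₁

lemma finitelyRepresentable_strongDual_of_isSuccLimit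
    (hsys : IsTransfiniteDualSystem R space zeroEquiv succEquiv incl) {β : Ordinal.{0}}
    (hlim : Order.IsSuccLimit β) (hβ : IsEvenOrdinal β)
    (IH : ∀ Γ < β, IsEvenOrdinal Γ →
      FinitelyRepresentable (StrongDual ℝ (space Γ)) (StrongDual ℝ R)) :
    FinitelyRepresentable (StrongDual ℝ (space β)) (StrongDual ℝ R) := by
  have ha : Tendsto (fun δ : ℝ ↦ 1 - δ) (𝓝[>] 0) (𝓝 1) :=
    ((continuous_const.sub continuous_id).tendsto' 0 1 (sub_zero 1)).mono_left nhdsWithin_le_nhds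
  have hb : Tendsto (fun δ : ℝ ↦ 1 + δ) (𝓝[>] 0) (𝓝 1) :=
    ((continuous_const.add continuous_id).tendsto' 0 1 (add_zero 1)).mono_left nhdsWithin_le_nhds
  refine finitelyRepresentable_of_tendsto ha hb ?_
  filter_upwards [self_mem_nhdsWithin] with δ (hδ : 0 < δ) F hF
  obtain ⟨Γ, hΓβ, hΓ, hres⟩ := hsys.exists_norm_comp_incl_ge hlim hβ F hδ
  set ι := (incl Γ β hΓβ hΓ hβ).toContinuousLinearMap
  let T : F →ₗ[ℝ] StrongDual ℝ (space Γ) :=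
    ((ContinuousLinearMap.compL ℝ _ _ ℝ).flip ι).toLinearMap ∘ₗ F.subtype
  have hT : ∀ f, (1 - δ) * ‖f‖ ≤ ‖T f‖ ∧ ‖T f‖ ≤ 1 * ‖f‖ := fun f ↦ by
    refine ⟨hres f, ?_⟩
    have hι : ‖ι‖ ≤ 1 := (incl Γ β hΓβ hΓ hβ).norm_toContinuousLinearMap_le
    simpa [T] using ((f : StrongDual ℝ (space β)).opNorm_comp_le ι).trans
      (mul_le_of_le_one_right (norm_nonneg _) hι)
  obtain ⟨S, hS⟩ := (IH Γ hΓβ hΓ (1 + δ) (by linarith)).exists_comp (by linarith) T hT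
  exact ⟨S, by simpa using hS⟩

theorem finitelyRepresentable_strongDual
    (hsys : IsTransfiniteDualSystem R space zeroEquiv succEquiv incl) (β : Ordinal.{0})
    (hβ : IsEvenOrdinal β) : FinitelyRepresentable (StrongDual ℝ (space β)) (StrongDual ℝ R) := by
  induction β using WellFoundedLT.induction with
  | ind β IH =>
  rcases hβ.eq_zero_or_isSuccLimit_or_eq_add_one_add_one with rfl | hlim | ⟨γ, hγ, rfl⟩
  · exact zeroEquiv.symm.strongDualMap.finitelyRepresentable
  · exact hsys.finitelyRepresentable_strongDual_of_isSuccLimit hlim hβ IH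
  · have hγlt : γ < γ + 1 + 1 := by
      rw [add_assoc]
      exact lt_add_of_pos_right γ (by norm_num)
    exact (succEquiv (γ + 1)).symm.strongDualMap.finitelyRepresentable
      |>.trans (finitelyRepresentable_bidual _)
      |>.trans (succEquiv γ).toLinearIsometry.finitelyRepresentable
      |>.trans (IH γ hγlt hγ)

end IsTransfiniteDualSystem

theorem statement4_general {R : Type u} [NormedAddCommGroup R] [NormedSpace ℝ R] [CompleteSpace R]
    (space : Ordinal.{0} → Type u)
    [∀ α, NormedAddCommGroup (space α)] [∀ α, NormedSpace ℝ (space α)]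
    [∀ α, CompleteSpace (space α)]
    (zeroEquiv : space 0 ≃ₗᵢ[ℝ] R)
    (succEquiv : ∀ α, space (α + 1) ≃ₗᵢ[ℝ] StrongDual ℝ (space α))
    (incl : ∀ β γ, β < γ → IsEvenOrdinal β → IsEvenOrdinal γ → (space β →ₗᵢ[ℝ] space γ))
    (hsys : IsTransfiniteDualSystem R space zeroEquiv succEquiv incl)
    {E : Type v} [NormedAddCommGroup E] [NormedSpace ℝ E]
    (iso : StrongDual ℝ R ≃L[ℝ] E) :
    CrudelyFinitelyRepresentable (space (Ordinal.omega0 * Ordinal.omega0 + 1)) E := by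
  have hω : Order.IsSuccLimit (Ordinal.omega0 * Ordinal.omega0) :=
    Ordinal.isSuccLimit_mul_right Ordinal.omega0_pos Ordinal.isSuccLimit_omega0
  exact (succEquiv _).toLinearIsometry.finitelyRepresentable
    |>.trans (hsys.finitelyRepresentable_strongDual _ hω.isEvenOrdinal)
    |>.crudelyFinitelyRepresentable iso

/-- If `R*` is isomorphic to a Banach space `E`, then the transfinite dual `R^(ω²+1)` is
crudely finitely representable in `E`. -/
theorem statement4 {R : Type u} [NormedAddCommGroup R] [NormedSpace ℝ R] [CompleteSpace R]
    (space : Ordinal.{0} → Type u)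
    [∀ α, NormedAddCommGroup (space α)] [∀ α, NormedSpace ℝ (space α)]
    [∀ α, CompleteSpace (space α)]
    (zeroEquiv : space 0 ≃ₗᵢ[ℝ] R)
    (succEquiv : ∀ α, space (α + 1) ≃ₗᵢ[ℝ] StrongDual ℝ (space α))
    (incl : ∀ β γ, β < γ → IsEvenOrdinal β → IsEvenOrdinal γ → (space β →ₗᵢ[ℝ] space γ))
    (hsys : IsTransfiniteDualSystem R space zeroEquiv succEquiv incl)
    {E : Type v} [NormedAddCommGroup E] [NormedSpace ℝ E] [CompleteSpace E]
    (iso : StrongDual ℝ R ≃L[ℝ] E) :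
    CrudelyFinitelyRepresentable (space (Ordinal.omega0 * Ordinal.omega0 + 1)) E :=
  statement4_general space zeroEquiv succEquiv incl hsys iso
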